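/- arXiv:2509.22539 — 3 statements merged into one kernel-verified Lean document; each statement's English description precedes it below -/
import Mathlib

section
/- If G is the star graph K_{1,n-1} (n ≥ 2) with center vertex c, then the Randić energy of the center satisfies RE_G(c) = 1. -/
open Matrix BigOperators Finset
open scoped Classical

/-- `M * Mᴴ` is positive semidefinite. -/
theorem mulConjTranspose_posSemidef {V : Type*} [Fintype V] [DecidableEq V]
    (M : Matrix V V ℝ) : (M * Mᴴ).PosSemidef := by
  simpa using Matrix.posSemidef_conjTranspose_mul_self Mᴴ

/-- The absolute value `|M| = (M M*)^(1/2)` of a matrix. -/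
noncomputable def matAbs {V : Type*} [Fintype V] [DecidableEq V]
    (M : Matrix V V ℝ) : Matrix V V ℝ :=
  (mulConjTranspose_posSemidef M).1.eigenvectorUnitary.1 *
    diagonal ((RCLike.ofReal : ℝ → ℝ) ∘ Real.sqrt ∘ (mulConjTranspose_posSemidef M).1.eigenvalues) *
    (star (mulConjTranspose_posSemidef M).1.eigenvectorUnitary : Matrix V V ℝ)

/-- The Randić matrix of a simple graph. -/
noncomputable def randicMatrix {V : Type*} [Fintype V] [DecidableEq V]
    (G : SimpleGraph V) : Matrix V V ℝ :=
  Matrix.of fun i j =>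
    if G.Adj i j then 1 / Real.sqrt ((G.degree i : ℝ) * (G.degree j : ℝ)) else 0

/-- The Randić energy of a vertex: `RE_G(v) = |R(G)|_{vv}`. -/
noncomputable def vertexRE {V : Type*} [Fintype V] [DecidableEq V]
    (G : SimpleGraph V) (i : V) : ℝ :=
  matAbs (randicMatrix G) i i

/-- The center of the star graph has Randić vertex energy 1. -/
theorem randic_vertex_energy_star_center {n : ℕ} (hn : 2 ≤ n) (G : SimpleGraph (Fin n))
    (c : Fin n) (hstar : ∀ i j, G.Adj i j ↔ i ≠ j ∧ (i = c ∨ j = c)) :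
    vertexRE G c = 1 := by
  classical
  have hdegc : G.degree c = n - 1 := by
    rw [SimpleGraph.degree]
    have h : G.neighborFinset c = univ.erase c := by
      ext k
      simp only [SimpleGraph.mem_neighborFinset, hstar, mem_erase, mem_univ, and_true]
      constructor
      · rintro ⟨h1, _⟩; exact fun hk => h1 hk.symm
      · intro hk; exact ⟨fun h => hk h.symm, Or.inl trivial⟩
    rw [h, card_erase_of_mem (mem_univ c), card_univ, Fintype.card_fin]
  have hdegleaf : ∀ j, j ≠ c → G.degree j = 1 := by
    intro j hj
    rw [SimpleGraph.degree]
    have h : G.neighborFinset j = {c} := by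
      ext k
      simp only [SimpleGraph.mem_neighborFinset, hstar, mem_singleton]
      constructor
      · rintro ⟨h1, h2⟩; exact h2.resolve_left hj
      · rintro rfl; exact ⟨hj, Or.inr rfl⟩
    rw [h, card_singleton]
  set m : ℕ := n - 1 with hm
  have hm1 : 1 ≤ m := by omega
  have hmR : (0:ℝ) < (m:ℝ) := by exact_mod_cast hm1
  have hmne : (m:ℝ) ≠ 0 := ne_of_gt hmR
  set s : ℝ := Real.sqrt m with hs
  have hs2 : s * s = m := Real.mul_self_sqrt (le_of_lt hmR)
  have hspos : 0 < s := Real.sqrt_pos.mpr hmR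
  set R := randicMatrix G with hRdef
  have hR : ∀ i j, R i j = if i ≠ j ∧ (i = c ∨ j = c) then 1 / s else 0 := by
    intro i j
    rw [hRdef, randicMatrix, Matrix.of_apply, hstar]
    split_ifs with h
    · obtain ⟨hij, hc⟩ := h
      rcases hc with rfl | rfl
      · rw [hdegc, hdegleaf j (fun h => hij h.symm)]
        simp [hs, mul_comm]
      · rw [hdegc, hdegleaf i hij]
        simp [hs]
    · rfl
  have hRc : ∀ k, R c k = if k = c then 0 else 1 / s := by
    intro k
    rw [hR]
    by_cases hk : k = c
    · rw [if_pos hk, if_neg]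
      rintro ⟨h1, _⟩
      exact h1 hk.symm
    · rw [if_neg hk, if_pos ⟨fun h => hk h.symm, Or.inl rfl⟩]
  have hRleaf : ∀ j, j ≠ c → ∀ k, R j k = if k = c then 1 / s else 0 := by
    intro j hj k
    rw [hR]
    by_cases hk : k = c
    · rw [if_pos hk, if_pos ⟨fun h => hj (h.trans hk), Or.inr hk⟩]
    · rw [if_neg hk, if_neg]
      rintro ⟨_, h2 | h2⟩
      · exact hj h2
      · exact hk h2
  have key : ∀ (y : ℝ), ∑ k : Fin n, (if k = c then 0 else y) = (m:ℝ) * y := by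
    intro y
    rw [Finset.sum_ite, Finset.sum_const, Finset.sum_const, nsmul_eq_mul, nsmul_eq_mul]
    have h1 : (univ.filter (fun k : Fin n => ¬ k = c)) = univ.erase c := by
      ext k; simp [and_comm]
    rw [h1, card_erase_of_mem (mem_univ c), card_univ, Fintype.card_fin]
    simp [hm]
  have hA : ∀ i j, (R * Rᴴ) i j =
      if i = c ∧ j = c then 1 else if i ≠ c ∧ j ≠ c then 1 / (m:ℝ) else 0 := by
    intro i j
    rw [Matrix.mul_apply]
    simp only [Matrix.conjTranspose_apply, star_trivial]
    by_cases hi : i = c <;> by_cases hj : j = c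
    · rw [hi, hj, if_pos ⟨rfl, rfl⟩]
      have h1 : ∀ k ∈ univ, R c k * R c k = if k = c then 0 else 1/s * (1/s) := by
        intro k _; rw [hRc]; split_ifs <;> ring
      rw [Finset.sum_congr rfl h1, key, div_mul_div_comm, one_mul, hs2]
      field_simp
    · rw [if_neg (by simp [hj]), if_neg (by simp [hi])]
      apply Finset.sum_eq_zero
      intro k _
      rw [hi, hRc k, hRleaf j hj k]
      split_ifs <;> ring
    · rw [if_neg (by simp [hi]), if_neg (by simp [hj])]
      apply Finset.sum_eq_zero
      intro k _
      rw [hj, hRleaf i hi k, hRc k]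
      split_ifs <;> ring
    · rw [if_neg (by simp [hi]), if_pos ⟨hi, hj⟩]
      rw [Finset.sum_eq_single c]
      · rw [hRleaf i hi c, hRleaf j hj c, if_pos rfl, div_mul_div_comm, one_mul, hs2]
      · intro k _ hk
        rw [hRleaf i hi k, hRleaf j hj k, if_neg hk, zero_mul]
      · simp
  have hA2 : (R * Rᴴ) * (R * Rᴴ) = R * Rᴴ := by
    ext i j
    rw [Matrix.mul_apply, hA i j]
    by_cases hi : i = c <;> by_cases hj : j = c
    · rw [if_pos ⟨hi, hj⟩, Finset.sum_eq_single c]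
      · rw [hi, hj, hA c c, if_pos ⟨rfl, rfl⟩, one_mul]
      · intro k _ hk
        rw [hi, hA c k, if_neg (by simp [hk]), if_neg (by simp), zero_mul]
      · simp
    · rw [if_neg (by simp [hj]), if_neg (by simp [hi])]
      apply Finset.sum_eq_zero
      intro k _
      rw [hi]
      by_cases hk : k = c
      · rw [hk, hA c j, if_neg (by simp [hj]), if_neg (by simp), mul_zero]
      · rw [hA c k, if_neg (by simp [hk]), if_neg (by simp), zero_mul]
    · rw [if_neg (by simp [hi]), if_neg (by simp [hj])]
      apply Finset.sum_eq_zero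
      intro k _
      rw [hj]
      by_cases hk : k = c
      · rw [hk, hA i c, if_neg (by simp [hi]), if_neg (by simp), zero_mul]
      · rw [hA k c, if_neg (by simp [hk]), if_neg (by simp), mul_zero]
    · rw [if_neg (by simp [hi]), if_pos ⟨hi, hj⟩]
      have h1 : ∀ k ∈ univ, (R * Rᴴ) i k * (R * Rᴴ) k j =
          if k = c then 0 else 1/(m:ℝ) * (1/(m:ℝ)) := by
        intro k _
        by_cases hk : k = c
        · rw [if_pos hk, hk, hA i c, if_neg (by simp [hi]), if_neg (by simp), zero_mul]
        · rw [if_neg hk, hA i k, if_neg (by simp [hi]), if_pos ⟨hi, hk⟩,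
            hA k j, if_neg (by simp [hk]), if_pos ⟨hk, hj⟩]
      rw [Finset.sum_congr rfl h1, key]
      field_simp
  have hsqrt : R * Rᴴ = (mulConjTranspose_posSemidef R).1.eigenvectorUnitary.1 *
      diagonal ((RCLike.ofReal : ℝ → ℝ) ∘ Real.sqrt ∘
        (mulConjTranspose_posSemidef R).1.eigenvalues) *
      (star (mulConjTranspose_posSemidef R).1.eigenvectorUnitary : Matrix (Fin n) (Fin n) ℝ) := by
    set hP := mulConjTranspose_posSemidef R
    have heig : ∀ j, Real.sqrt (hP.1.eigenvalues j) = hP.1.eigenvalues j := by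
      intro j
      have hv := hP.1.mulVec_eigenvectorBasis j
      have h2 : (R * Rᴴ) *ᵥ ((R * Rᴴ) *ᵥ ⇑(hP.1.eigenvectorBasis j))
          = (R * Rᴴ) *ᵥ ⇑(hP.1.eigenvectorBasis j) := by
        rw [Matrix.mulVec_mulVec, hA2]
      rw [hv, Matrix.mulVec_smul, hv, smul_smul, ← sub_eq_zero, ← sub_smul] at h2
      have hne : hP.1.eigenvectorBasis j ≠ 0 := (hP.1.eigenvectorBasis).orthonormal.ne_zero j
      rcases smul_eq_zero.mp h2 with h | h
      · have hl : hP.1.eigenvalues j = 0 ∨ hP.1.eigenvalues j = 1 := by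
          have : hP.1.eigenvalues j * (hP.1.eigenvalues j - 1) = 0 := by linarith
          rcases mul_eq_zero.mp this with h' | h'
          · exact Or.inl h'
          · exact Or.inr (by linarith)
        rcases hl with h' | h' <;> rw [h'] <;> simp
      · exact absurd (by ext i; exact congrFun h i) hne
    have hf : ((RCLike.ofReal : ℝ → ℝ) ∘ Real.sqrt ∘ hP.1.eigenvalues)
        = (RCLike.ofReal ∘ hP.1.eigenvalues) := by
      funext j; simp only [Function.comp_apply, heig]
    rw [hf]
    conv_lhs => rw [hP.1.spectral_theorem]
    rw [Unitary.conjStarAlgAut_apply]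
  simp only [vertexRE, matAbs]
  rw [← hRdef, ← hsqrt, hA c c, if_pos ⟨rfl, rfl⟩]
end

section
/- If v_i and v_j are adjacent vertices of a connected simple graph G, then RE_G(v_i) · RE_G(v_j) ≥ 1/(d_i d_j). -/
open Matrix BigOperators Finset
open scoped Classical

lemma psd_entry_sq_le {V : Type*} [Fintype V] [DecidableEq V] {A : Matrix V V ℝ}
    (hA : A.PosSemidef) (i j : V) : (A i j)^2 ≤ A i i * A j j := by
  have hji : A j i = A i j := by
    have := congrFun (congrFun hA.1 i) j
    simpa [conjTranspose_apply] using this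
  rcases eq_or_ne i j with rfl | hij
  · rw [sq]
  have key : ∀ t : ℝ, 0 ≤ A i i * (t*t) + (2 * A i j) * t + A j j := by
    intro t
    have h := hA.dotProduct_mulVec_nonneg (fun k => if k = i then t else if k = j then 1 else 0)
    simp only [dotProduct, mulVec, star, Pi.star_apply, star_trivial] at h
    have inner : ∀ k, (∑ l, A k l * (if l = i then t else if l = j then 1 else 0))
        = A k i * t + A k j := by
      intro k
      have : ∀ l, A k l * (if l = i then t else if l = j then 1 else 0) =
          (if l = i then A k i * t else 0) + (if l = j then A k j else 0) := by
        intro l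
        rcases eq_or_ne l i with rfl | hli
        · simp [hij]
        · rcases eq_or_ne l j with rfl | hlj
          · simp [hli]
          · simp [hli, hlj]
      simp only [this, Finset.sum_add_distrib, Finset.sum_ite_eq', Finset.mem_univ, if_true]
    simp only [inner] at h
    have outer : (∑ k, (if k = i then t else if k = j then 1 else 0) * (A k i * t + A k j))
        = t * (A i i * t + A i j) + (A j i * t + A j j) := by
      have : ∀ k, (if k = i then t else if k = j then 1 else 0) * (A k i * t + A k j) =
          (if k = i then t * (A i i * t + A i j) else 0) +
          (if k = j then A j i * t + A j j else 0) := by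
        intro k
        rcases eq_or_ne k i with rfl | hki
        · simp [hij]
        · rcases eq_or_ne k j with rfl | hkj
          · simp [hki]
          · simp [hki, hkj]
      simp only [this, Finset.sum_add_distrib, Finset.sum_ite_eq', Finset.mem_univ, if_true]
    rw [outer] at h
    have heq : A i i * (t*t) + (2 * A i j) * t + A j j
        = t * (A i i * t + A i j) + (A j i * t + A j j) := by rw [hji]; ring
    linarith [h, heq.ge]
  have hd := discrim_le_zero key
  rw [discrim] at hd
  nlinarith [hd]

lemma conj_diag_posSemidef {V : Type*} [Fintype V] [DecidableEq V]
    (U : Matrix V V ℝ) (d : V → ℝ) (hd : ∀ k, 0 ≤ d k) :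
    (U * Matrix.diagonal d * star U).PosSemidef := by
  simpa [Matrix.star_eq_conjTranspose] using
    (Matrix.posSemidef_diagonal_iff.mpr hd).mul_mul_conjTranspose_same U

lemma matAbs_add_sub_posSemidef {V : Type*} [Fintype V] [DecidableEq V]
    (R : Matrix V V ℝ) (hR : R.IsHermitian) :
    (matAbs R + R).PosSemidef ∧ (matAbs R - R).PosSemidef := by
  set U : Matrix V V ℝ := (hR.eigenvectorUnitary : Matrix V V ℝ) with hU
  set lam : V → ℝ := hR.eigenvalues with hlam
  have hstar : star U * U = 1 := by
    have := Unitary.coe_star_mul_self hR.eigenvectorUnitary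
    simpa [hU] using this
  have hsp : R = U * Matrix.diagonal lam * star U := by
    have := hR.spectral_theorem
    simpa [RCLike.ofReal_real_eq_id] using this
  have hconj : ∀ d e : V → ℝ, (U * Matrix.diagonal d * star U) * (U * Matrix.diagonal e * star U)
      = U * Matrix.diagonal (fun k => d k * e k) * star U := by
    intro d e
    have : Matrix.diagonal (fun k => d k * e k) = Matrix.diagonal d * Matrix.diagonal e := by
      rw [Matrix.diagonal_mul_diagonal]
    rw [this]
    calc (U * Matrix.diagonal d * star U) * (U * Matrix.diagonal e * star U)
        = U * Matrix.diagonal d * (star U * U) * Matrix.diagonal e * star U := by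
          simp only [Matrix.mul_assoc]
      _ = U * (Matrix.diagonal d * Matrix.diagonal e) * star U := by
          rw [hstar]; simp only [Matrix.mul_assoc, Matrix.one_mul]
  set B : Matrix V V ℝ := U * Matrix.diagonal (fun k => |lam k|) * star U with hB
  have hBpsd : B.PosSemidef := conj_diag_posSemidef U _ (fun k => abs_nonneg _)
  have hB2 : B ^ 2 = R * Rᴴ := by
    rw [hR.eq, pow_two, hB, hconj]
    conv_rhs => rw [hsp]
    rw [hconj]
    have habs : (fun k => |lam k| * |lam k|) = fun k => lam k * lam k :=
      funext fun k => abs_mul_abs_self _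
    rw [habs]
  have hBeq : B = matAbs R := by
    open scoped MatrixOrder in
    have hP := mulConjTranspose_posSemidef R
    have h1 : matAbs R = cfc Real.sqrt (R * Rᴴ) := by
      rw [hP.1.cfc_eq]
      simp [matAbs, IsHermitian.cfc, Unitary.conjStarAlgAut_apply]
    rw [h1, ← cfcₙ_eq_cfc (hf0 := Real.sqrt_zero), ← CFC.sqrt_eq_real_sqrt (R * Rᴴ) (Matrix.nonneg_iff_posSemidef.mpr hP)]
    exact (CFC.sqrt_unique (by rw [← pow_two]; exact hB2)
      (Matrix.nonneg_iff_posSemidef.mpr hBpsd)).symm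
  constructor
  · have : matAbs R + R = U * Matrix.diagonal (fun k => |lam k| + lam k) * star U := by
      rw [← hBeq, hB]
      conv_lhs => rw [hsp]
      rw [show Matrix.diagonal (fun k => |lam k| + lam k)
          = Matrix.diagonal (fun k => |lam k|) + Matrix.diagonal lam from by
            rw [Matrix.diagonal_add], Matrix.mul_add, Matrix.add_mul]
    rw [this]
    exact conj_diag_posSemidef U _ (fun k => by linarith [neg_abs_le (lam k)])
  · have : matAbs R - R = U * Matrix.diagonal (fun k => |lam k| - lam k) * star U := by
      rw [← hBeq, hB]
      conv_lhs => rw [hsp]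
      rw [show Matrix.diagonal (fun k => |lam k| - lam k)
          = Matrix.diagonal (fun k => |lam k|) - Matrix.diagonal lam from by
            rw [Matrix.diagonal_sub], Matrix.mul_sub, Matrix.sub_mul]
    rw [this]
    exact conj_diag_posSemidef U _ (fun k => by linarith [le_abs_self (lam k)])

/-- For adjacent vertices, `RE_G(v_i) · RE_G(v_j) ≥ 1/(d_i d_j)`. -/
theorem randic_vertex_energy_adjacent_product {n : ℕ} (G : SimpleGraph (Fin n))
    (hG : G.Connected) (i j : Fin n) (hadj : G.Adj i j) :
    1 / ((G.degree i : ℝ) * (G.degree j : ℝ)) ≤ vertexRE G i * vertexRE G j := by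
  set R := randicMatrix G with hRdef
  have hherm : R.IsHermitian := by
    ext a b
    by_cases h : G.Adj a b
    · simp [hRdef, randicMatrix, Matrix.conjTranspose_apply, h, h.symm, mul_comm]
    · have h' : ¬ G.Adj b a := fun hh => h hh.symm
      simp [hRdef, randicMatrix, Matrix.conjTranspose_apply, h, h']
  have hRii : R i i = 0 := by simp [hRdef, randicMatrix]
  have hRjj : R j j = 0 := by simp [hRdef, randicMatrix]
  have hRij : R i j = 1 / Real.sqrt ((G.degree i : ℝ) * (G.degree j : ℝ)) := by
    simp [hRdef, randicMatrix, hadj]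
  obtain ⟨hplus, hminus⟩ := matAbs_add_sub_posSemidef R hherm
  have e1 := psd_entry_sq_le hplus i j
  have e2 := psd_entry_sq_le hminus i j
  simp only [Matrix.add_apply, Matrix.sub_apply, hRii, hRjj, add_zero, sub_zero] at e1 e2
  have hdi : 0 < (G.degree i : ℝ) := by
    exact_mod_cast (G.degree_pos_iff_exists_adj i).mpr ⟨j, hadj⟩
  have hdj : 0 < (G.degree j : ℝ) := by
    exact_mod_cast (G.degree_pos_iff_exists_adj j).mpr ⟨i, hadj.symm⟩
  have hp : 0 < (G.degree i : ℝ) * (G.degree j : ℝ) := mul_pos hdi hdj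
  have hr2 : (R i j)^2 = 1 / ((G.degree i : ℝ) * (G.degree j : ℝ)) := by
    rw [hRij, div_pow, one_pow, Real.sq_sqrt hp.le]
  have hre : vertexRE G i = matAbs R i i := rfl
  have hrf : vertexRE G j = matAbs R j j := rfl
  rw [hre, hrf, ← hr2]
  nlinarith [e1, e2, sq_nonneg (matAbs R i j)]
end

section
/- For the complete bipartite graph K_{n_1,n_2}, every vertex v in the part of size n_1 has Randić energy RE(v) = 1/n_1, and every vertex in the part of size n_2 has Randić energy 1/n_2. -/
open Matrix BigOperators Finset
open scoped Classical

lemma cb_degree_inl {n₁ n₂ : ℕ} (a : Fin n₁) :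
    (completeBipartiteGraph (Fin n₁) (Fin n₂)).degree (Sum.inl a) = n₂ := by
  simp [SimpleGraph.degree, SimpleGraph.neighborFinset, SimpleGraph.neighborSet]
  rw [Finset.card_eq_of_bijective (fun i h => Sum.inr ⟨i, h⟩)]
  · intro x hx
    rcases x with x | x
    · exact absurd (Set.mem_toFinset.mp hx) (by simp)
    · exact ⟨x, x.2, by simp⟩
  · intro i h; exact Set.mem_toFinset.mpr (by simp)
  · intro i j hi hj hij; simpa [Fin.ext_iff] using hij

lemma cb_degree_inr {n₁ n₂ : ℕ} (b : Fin n₂) :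
    (completeBipartiteGraph (Fin n₁) (Fin n₂)).degree (Sum.inr b) = n₁ := by
  simp [SimpleGraph.degree, SimpleGraph.neighborFinset, SimpleGraph.neighborSet]
  rw [Finset.card_eq_of_bijective (fun i h => Sum.inl ⟨i, h⟩)]
  · intro x hx
    rcases x with x | x
    · exact ⟨x, x.2, by simp⟩
    · exact absurd (Set.mem_toFinset.mp hx) (by simp)
  · intro i h; exact Set.mem_toFinset.mpr (by simp)
  · intro i j hi hj hij; simpa [Fin.ext_iff] using hij

/-- In the complete bipartite graph `K_{n₁,n₂}`, vertices in the part of size `n₁`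
have Randić energy `1/n₁`, and those in the part of size `n₂` have energy `1/n₂`. -/
theorem randic_vertex_energy_complete_bipartite {n₁ n₂ : ℕ} (h₁ : 1 ≤ n₁) (h₂ : 1 ≤ n₂) :
    (∀ a : Fin n₁,
      vertexRE (completeBipartiteGraph (Fin n₁) (Fin n₂)) (Sum.inl a) = 1 / (n₁ : ℝ)) ∧
    (∀ b : Fin n₂,
      vertexRE (completeBipartiteGraph (Fin n₁) (Fin n₂)) (Sum.inr b) = 1 / (n₂ : ℝ)) := by
  have hn₁ : (0:ℝ) < n₁ := by exact_mod_cast h₁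
  have hn₂ : (0:ℝ) < n₂ := by exact_mod_cast h₂
  set R := randicMatrix (completeBipartiteGraph (Fin n₁) (Fin n₂)) with hR
  set S : Matrix (Fin n₁ ⊕ Fin n₂) (Fin n₁ ⊕ Fin n₂) ℝ :=
    Matrix.of (fun i j =>
      match i, j with
      | Sum.inl _, Sum.inl _ => 1 / (n₁ : ℝ)
      | Sum.inr _, Sum.inr _ => 1 / (n₂ : ℝ)
      | _, _ => 0) with hSdef
  have hRval : ∀ i j, R i j =
      match i, j with
      | Sum.inl _, Sum.inr _ => 1 / (Real.sqrt n₁ * Real.sqrt n₂)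
      | Sum.inr _, Sum.inl _ => 1 / (Real.sqrt n₁ * Real.sqrt n₂)
      | _, _ => 0 := by
    intro i j
    rcases i with a | b <;> rcases j with a' | b' <;>
      simp [hR, randicMatrix, cb_degree_inl, cb_degree_inr, Real.sqrt_mul_self, mul_comm]
  have hSval : ∀ i j, S i j =
      match i, j with
      | Sum.inl _, Sum.inl _ => 1 / (n₁ : ℝ)
      | Sum.inr _, Sum.inr _ => 1 / (n₂ : ℝ)
      | _, _ => 0 := fun i j => rfl
  have hSherm : S.IsHermitian := by
    ext i j
    rcases i with a | b <;> rcases j with a' | b' <;>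
      simp [hSval, conjTranspose_apply]
  have hSidem : S * S = S := by
    ext i j
    rcases i with a | b <;> rcases j with a' | b' <;>
      simp [hSval, Matrix.mul_apply, Fintype.sum_sum_type] <;> field_simp
  have hSpsd : S.PosSemidef := by
    have h : S = Sᴴ * S := by rw [hSherm.eq, hSidem]
    rw [h]; exact Matrix.posSemidef_conjTranspose_mul_self S
  have hS2 : S ^ 2 = R * Rᴴ := by
    rw [sq]
    ext i j
    rcases i with a | b <;> rcases j with a' | b' <;>
      simp [hRval, hSval, Matrix.mul_apply, Fintype.sum_sum_type, conjTranspose_apply] <;>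
      field_simp <;> nlinarith [Real.mul_self_sqrt hn₁.le, Real.mul_self_sqrt hn₂.le]
  have key : S = matAbs R := by
    have hA := (mulConjTranspose_posSemidef R).1
    show S = hA.cfc Real.sqrt
    open scoped MatrixOrder in
    rw [← hA.cfc_eq, ← hS2, ← cfc_comp_pow Real.sqrt 2 S Real.continuous_sqrt.continuousOn hSpsd.isHermitian.isSelfAdjoint]
    conv_lhs => rw [← cfc_id' ℝ S (ha := hSpsd.isHermitian.isSelfAdjoint)]
    refine cfc_congr fun x hx => ?_
    have : 0 ≤ x := by
      have := hSpsd.nonneg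
      exact spectrum_nonneg_of_nonneg this hx
    simp [Real.sqrt_sq this]
  refine ⟨fun a => ?_, fun b => ?_⟩ <;>
    · rw [vertexRE, ← hR, ← key]
      simp [hSval]
end
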